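/- (Iteration lemma.) Let H, h be nonnegative continuous functions on (0,1], let 0 < ε < 1/6, θ ∈ (0,1/4), μ > 0, and C₀ > 0. Suppose for all r ∈ [ε, 1/3]: (a) max_{r ≤ t ≤ 3r} H(t) ≤ C₀ H(3r); (b) max_{r ≤ t,s ≤ 3r} |h(t) − h(s)| ≤ C₀ H(3r); and (c) H(θr) ≤ ½ H(r) + C₀ (ε/r)^μ (H(3r) + h(3r)). Then max_{ε ≤ r ≤ 1} (H(r) + h(r)) ≤ C (H(1) + h(1)), where C depends only on C₀, θ, and μ. -/

import Mathlib

open MeasureTheory Metric Set Classical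
noncomputable section

/-- partial derivative `∂_j f` of a scalar field. -/
def pd {d : ℕ} (f : EuclideanSpace ℝ (Fin d) → ℝ) (j : Fin d) (x : EuclideanSpace ℝ (Fin d)) : ℝ :=
  fderiv ℝ f x (EuclideanSpace.single j 1)

/-- 1-periodicity of a function. -/
def Per1 {d : ℕ} {α : Type*} (f : EuclideanSpace ℝ (Fin d) → α) : Prop :=
  ∀ (x : EuclideanSpace ℝ (Fin d)) (z : Fin d → ℤ), f (x + (WithLp.toLp 2 (fun i => (z i : ℝ)) : EuclideanSpace ℝ (Fin d))) = f x

/-- 1-periodicity of a set. -/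
def PerSet {d : ℕ} (ω : Set (EuclideanSpace ℝ (Fin d))) : Prop :=
  ∀ (x : EuclideanSpace ℝ (Fin d)) (z : Fin d → ℤ), ((x + (WithLp.toLp 2 (fun i => (z i : ℝ)) : EuclideanSpace ℝ (Fin d))) ∈ ω ↔ x ∈ ω)

/-- the unit cell `Q = [0,1)^d`. -/
def unitCell (d : ℕ) : Set (EuclideanSpace ℝ (Fin d)) :=
  {x | ∀ i, x i ∈ Set.Ico (0:ℝ) 1}

/-- elasticity symmetry conditions. -/
def ElasSym {d : ℕ} (A : EuclideanSpace ℝ (Fin d) → Fin d → Fin d → Fin d → Fin d → ℝ) : Prop :=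
  ∀ y i j α β, A y i j α β = A y j i β α ∧ A y i j α β = A y α j i β

/-- ellipticity on symmetric matrices, with constants κ₁ ≤ κ₂. -/
def ElasEll {d : ℕ} (κ₁ κ₂ : ℝ)
    (A : EuclideanSpace ℝ (Fin d) → Fin d → Fin d → Fin d → Fin d → ℝ) : Prop :=
  ∀ y (ξ : Fin d → Fin d → ℝ), (∀ i α, ξ i α = ξ α i) →
    κ₁ * (∑ i, ∑ α, (ξ i α)^2) ≤ (∑ i, ∑ j, ∑ α, ∑ β, A y i j α β * ξ i α * ξ j β) ∧
    (∑ i, ∑ j, ∑ α, ∑ β, A y i j α β * ξ i α * ξ j β) ≤ κ₂ * (∑ i, ∑ α, (ξ i α)^2)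

/-- symmetry for a constant tensor. -/
def ElasSymC {d : ℕ} (Ahat : Fin d → Fin d → Fin d → Fin d → ℝ) : Prop :=
  ∀ i j α β, Ahat i j α β = Ahat j i β α ∧ Ahat i j α β = Ahat α j i β

/-- ellipticity for a constant tensor. -/
def ElasEllC {d : ℕ} (κ₁ κ₂ : ℝ) (Ahat : Fin d → Fin d → Fin d → Fin d → ℝ) : Prop :=
  ∀ (ξ : Fin d → Fin d → ℝ), (∀ i α, ξ i α = ξ α i) →
    κ₁ * (∑ i, ∑ α, (ξ i α)^2) ≤ (∑ i, ∑ j, ∑ α, ∑ β, Ahat i j α β * ξ i α * ξ j β) ∧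
    (∑ i, ∑ j, ∑ α, ∑ β, Ahat i j α β * ξ i α * ξ j β) ≤ κ₂ * (∑ i, ∑ α, (ξ i α)^2)

/-- the weight `k_δ = 1_ω + δ 1_{ℝ^d ∖ ω}`. -/
def kwt {d : ℕ} (ω : Set (EuclideanSpace ℝ (Fin d))) (δ : ℝ) (x : EuclideanSpace ℝ (Fin d)) : ℝ :=
  if x ∈ ω then 1 else δ

/-- `|∇u|²` for a vector field given componentwise. -/
def gradSq {d : ℕ} (u : EuclideanSpace ℝ (Fin d) → Fin d → ℝ) (x : EuclideanSpace ℝ (Fin d)) : ℝ :=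
  ∑ j, ∑ β, (pd (fun y => u y β) j x)^2

/-- weak solution of `div(k_δ^ε A^ε ∇u) = 0` on `S`. -/
def WeakSol {d : ℕ} (ω : Set (EuclideanSpace ℝ (Fin d)))
    (A : EuclideanSpace ℝ (Fin d) → Fin d → Fin d → Fin d → Fin d → ℝ)
    (ε δ : ℝ) (u : EuclideanSpace ℝ (Fin d) → Fin d → ℝ)
    (S : Set (EuclideanSpace ℝ (Fin d))) : Prop :=
  (∀ β, Differentiable ℝ (fun y => u y β)) ∧
  ∀ w : EuclideanSpace ℝ (Fin d) → Fin d → ℝ,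
    (∀ α, ContDiff ℝ (⊤ : ℕ∞) (fun y => w y α)) → (∀ α, HasCompactSupport (fun y => w y α)) →
    (∀ α, tsupport (fun y => w y α) ⊆ S) →
    ∫ x in S, ∑ i, ∑ j, ∑ α, ∑ β,
      kwt ω δ (ε⁻¹ • x) * A (ε⁻¹ • x) i j α β *
        pd (fun y => u y β) j x * pd (fun y => w y α) i x = 0

/-- a uniform interior cone condition, our surrogate for the Lipschitz-boundary condition. -/
def ConeCond {d : ℕ} (Ω : Set (EuclideanSpace ℝ (Fin d))) : Prop :=
  ∃ r θ : ℝ, 0 < r ∧ 0 < θ ∧ θ < 1 ∧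
    ∀ x ∈ frontier Ω, ∃ ν : EuclideanSpace ℝ (Fin d), ‖ν‖ = 1 ∧
      ∀ y ∈ closure Ω ∩ ball x r, ∀ z : EuclideanSpace ℝ (Fin d),
        z ≠ y → ‖z - y‖ < r → θ * ‖z - y‖ < (inner ℝ (z - y) ν : ℝ) → z ∈ Ω

/-- bounded Lipschitz domain. -/
def IsBddLipDomain {d : ℕ} (Ω : Set (EuclideanSpace ℝ (Fin d))) : Prop :=
  IsOpen Ω ∧ Ω.Nonempty ∧ Bornology.IsBounded Ω ∧ ConeCond Ω

/-- unbounded 1-periodic Lipschitz domain. -/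
def IsPerLipDomain {d : ℕ} (ω : Set (EuclideanSpace ℝ (Fin d))) : Prop :=
  IsOpen ω ∧ ¬ Bornology.IsBounded ω ∧ PerSet ω ∧ ConeCond ω

/-- the bounded connected components of the complement of `ω` are well separated. -/
def SepIncl {d : ℕ} (ω : Set (EuclideanSpace ℝ (Fin d))) : Prop :=
  ∃ g : ℝ, 0 < g ∧
    (∀ x ∉ ω, Bornology.IsBounded (connectedComponentIn ωᶜ x)) ∧
    ∀ x y : EuclideanSpace ℝ (Fin d), x ∉ ω → y ∉ ω →
      connectedComponentIn ωᶜ x ≠ connectedComponentIn ωᶜ y →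
      ∀ p ∈ connectedComponentIn ωᶜ x, ∀ q ∈ connectedComponentIn ωᶜ y, g ≤ dist p q

/-- mollification at scale ε. -/
def moll {d : ℕ} (φ : EuclideanSpace ℝ (Fin d) → ℝ) (ε : ℝ)
    (g : EuclideanSpace ℝ (Fin d) → ℝ) (x : EuclideanSpace ℝ (Fin d)) : ℝ :=
  ∫ y, g (x - y) * (ε ^ (-(d:ℝ)) * φ (ε⁻¹ • y))

/-- standard mollifier: smooth, nonnegative, supported in `B(0,1)`, unit mass. -/
def IsMollifier {d : ℕ} (φ : EuclideanSpace ℝ (Fin d) → ℝ) : Prop :=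
  ContDiff ℝ (⊤ : ℕ∞) φ ∧ (∀ x, 0 ≤ φ x) ∧ tsupport φ ⊆ ball 0 1 ∧ (∫ x, φ x) = 1

/-- weak (pair) formulation of the corrector cell problem for `χ_{j,δ}^β`,
with `G` the weak gradient of `χ`. -/
def CellSol {d : ℕ} (ω : Set (EuclideanSpace ℝ (Fin d)))
    (A : EuclideanSpace ℝ (Fin d) → Fin d → Fin d → Fin d → Fin d → ℝ) (δ : ℝ) (j β : Fin d)
    (χ : EuclideanSpace ℝ (Fin d) → Fin d → ℝ)
    (G : EuclideanSpace ℝ (Fin d) → Fin d → Fin d → ℝ) : Prop :=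
  (∀ γ, Per1 (fun y => χ y γ)) ∧ (∀ k γ, Per1 (fun y => G y k γ)) ∧
  (∀ γ, Integrable (fun y => (χ y γ)^2) (volume.restrict (unitCell d))) ∧
  (∀ k γ, Integrable (fun y => (G y k γ)^2) (volume.restrict (unitCell d))) ∧
  (∀ ψ : EuclideanSpace ℝ (Fin d) → ℝ, ContDiff ℝ (⊤ : ℕ∞) ψ → HasCompactSupport ψ →
    ∀ k γ, ∫ x, χ x γ * pd ψ k x = - ∫ x, G x k γ * ψ x) ∧
  (∀ γ, ∫ y in unitCell d, χ y γ = 0) ∧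
  (∀ φ : EuclideanSpace ℝ (Fin d) → Fin d → ℝ,
     (∀ α, ContDiff ℝ (⊤ : ℕ∞) (fun y => φ y α)) → (∀ α, Per1 (fun y => φ y α)) →
     ∫ y in unitCell d, ∑ i, ∑ k, ∑ α, ∑ γ,
       kwt ω δ y * A y i k α γ *
         (G y k γ + (if k = j ∧ γ = β then 1 else 0)) * pd (fun z => φ z α) i y = 0)

/-- strong (differentiable) formulation for the full corrector matrix
`𝕏_{j,δ}^β = y_j e^β + χ_{j,δ}^β`. -/
def CorrSol {d : ℕ} (ω : Set (EuclideanSpace ℝ (Fin d)))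
    (A : EuclideanSpace ℝ (Fin d) → Fin d → Fin d → Fin d → Fin d → ℝ) (δ : ℝ)
    (X : Fin d → Fin d → EuclideanSpace ℝ (Fin d) → Fin d → ℝ) : Prop :=
  (∀ j β γ, Differentiable ℝ (fun y => X j β y γ)) ∧
  (∀ j β γ, Per1 (fun y => X j β y γ - (if γ = β then y j else 0))) ∧
  (∀ φ : EuclideanSpace ℝ (Fin d) → Fin d → ℝ,
     (∀ α, ContDiff ℝ (⊤ : ℕ∞) (fun y => φ y α)) → (∀ α, Per1 (fun y => φ y α)) →
     ∀ j β, ∫ y in unitCell d, ∑ i, ∑ k, ∑ α, ∑ γ,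
       kwt ω δ y * A y i k α γ * pd (fun z => X j β z γ) k y * pd (fun z => φ z α) i y = 0)

/-- weighted L²-flatness excess of `w` on `B(x₀,r)`. -/
def flat {d : ℕ} (ω : Set (EuclideanSpace ℝ (Fin d))) (ε δ : ℝ)
    (x₀ : EuclideanSpace ℝ (Fin d)) (r : ℝ)
    (w : EuclideanSpace ℝ (Fin d) → Fin d → ℝ) : ℝ :=
  (1 / r) * ⨅ p : (Fin d → Fin d → ℝ) × (Fin d → ℝ),
    (⨍ x in ball x₀ r, ∑ γ, (kwt ω δ (ε⁻¹ • x) *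
      (w x γ - (∑ j, p.1 γ j * x j) - p.2 γ))^2) ^ ((1:ℝ)/2)

/-- boundary `H¹(∂Ω)`-type norm, via the `(d-1)`-dimensional Hausdorff measure. -/
def bnormH1 {d : ℕ} (Ω : Set (EuclideanSpace ℝ (Fin d)))
    (f : EuclideanSpace ℝ (Fin d) → Fin d → ℝ) : ℝ :=
  ((∫ x in frontier Ω, ∑ β, (f x β)^2 ∂(μH[((d:ℝ) - 1)])) +
   (∫ x in frontier Ω, gradSq f x ∂(μH[((d:ℝ) - 1)]))) ^ ((1:ℝ)/2)


set_option maxHeartbeats 1000000 in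
theorem statement9 (C₀ θ μ : ℝ) (hC₀ : 0 < C₀) (hθ : θ ∈ Set.Ioo (0:ℝ) (1/4)) (hμ : 0 < μ) :
    ∃ C : ℝ, 0 < C ∧
      ∀ H h : ℝ → ℝ, ∀ ε : ℝ, 0 < ε → ε < 1/6 →
        ContinuousOn H (Set.Ioc 0 1) → ContinuousOn h (Set.Ioc 0 1) →
        (∀ r ∈ Set.Ioc (0:ℝ) 1, 0 ≤ H r ∧ 0 ≤ h r) →
        (∀ r ∈ Set.Icc ε (1/3), ∀ t ∈ Set.Icc r (3*r), H t ≤ C₀ * H (3*r)) →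
        (∀ r ∈ Set.Icc ε (1/3), ∀ t ∈ Set.Icc r (3*r), ∀ s ∈ Set.Icc r (3*r),
          |h t - h s| ≤ C₀ * H (3*r)) →
        (∀ r ∈ Set.Icc ε (1/3),
          H (θ*r) ≤ (1/2) * H r + C₀ * (ε/r) ^ μ * (H (3*r) + h (3*r))) →
        ∀ r ∈ Set.Icc ε 1, H r + h r ≤ C * (H 1 + h 1) := by
  classical
  obtain ⟨hθ0, hθ4⟩ := hθ
  have hθ1 : θ < 1 := by linarith
  obtain ⟨N, hN1, hCN⟩ : ∃ N : ℝ, 1 ≤ N ∧ C₀ ≤ N :=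
    ⟨max C₀ 1, le_max_right _ _, le_max_left _ _⟩
  have hN0 : (0:ℝ) < N := lt_of_lt_of_le one_pos hN1
  obtain ⟨m, hm'⟩ : ∃ m : ℕ, 1/θ < 3^m := pow_unbounded_of_one_lt (1/θ) (by norm_num)
  have hm : (1:ℝ) ≤ 3^m * θ := by
    rw [div_lt_iff₀ hθ0] at hm'; linarith
  have h3mpos : (0:ℝ) < 3^m := by positivity
  obtain ⟨M, hM1, hMge⟩ : ∃ M : ℝ, 1 ≤ M ∧ N^m ≤ M := ⟨N^m, one_le_pow₀ hN1, le_rfl⟩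
  have hM0 : (0:ℝ) < M := lt_of_lt_of_le one_pos hM1
  obtain ⟨c₂, hc₂0, hc₂ge⟩ : ∃ c₂ : ℝ, 0 ≤ c₂ ∧ (m:ℝ)*N^m ≤ c₂ := ⟨_, by positivity, le_rfl⟩
  obtain ⟨s, hs0, hs1, hsq⟩ : ∃ s : ℝ, 0 < s ∧ s < 1 ∧ θ^μ ≤ s*s := by
    have hq0 : 0 < θ^μ := Real.rpow_pos_of_pos hθ0 μ
    have hq1 : θ^μ < 1 := Real.rpow_lt_one hθ0.le hθ1 hμ
    have h1 : Real.sqrt (θ^μ) * Real.sqrt (θ^μ) = θ^μ := Real.mul_self_sqrt hq0.le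
    have h2 : 0 < Real.sqrt (θ^μ) := Real.sqrt_pos.mpr hq0
    refine ⟨Real.sqrt (θ^μ), h2, ?_, h1.ge⟩
    nlinarith [sq_nonneg (Real.sqrt (θ^μ) - 1)]
  have hs11 : 0 < 1 - s := by linarith
  obtain ⟨P, hP0, hP2M, hP1⟩ : ∃ P : ℝ, 0 < P ∧ 2*M ≤ P ∧ 1 ≤ P :=
    ⟨2*M+1, by linarith, by linarith, by linarith⟩
  have hsfrac : 0 ≤ s/(1-s) := div_nonneg hs0.le hs11.le
  obtain ⟨Q, hQ1, hQge⟩ : ∃ Q : ℝ, 1 ≤ Q ∧ 1 + c₂*P*(2 + s/(1-s)) ≤ Q := by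
    refine ⟨1 + c₂*P*(2 + s/(1-s)), ?_, le_rfl⟩
    have : (0:ℝ) ≤ c₂*P*(2 + s/(1-s)) := mul_nonneg (mul_nonneg hc₂0 hP0.le) (by linarith)
    linarith
  obtain ⟨Z, hZ0, hZge⟩ : ∃ Z : ℝ, 0 < Z ∧ 2*(M+c₂)*P + Q ≤ Z := by
    refine ⟨2*(M+c₂)*P + Q, ?_, le_rfl⟩
    have : (0:ℝ) ≤ 2*(M+c₂)*P := mul_nonneg (by linarith) hP0.le
    linarith
  obtain ⟨L, hLkey⟩ : ∃ L : ℕ, C₀ * s^(L+1) * Z ≤ P/2 := by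
    obtain ⟨n, hn⟩ := exists_pow_lt_of_lt_one (show (0:ℝ) < P/(2*C₀*Z) by positivity) hs1
    refine ⟨n, ?_⟩
    have h1 : s^(n+1) ≤ s^n := pow_le_pow_of_le_one hs0.le hs1.le (Nat.le_succ n)
    have h2 : s^(n+1) ≤ P/(2*C₀*Z) := le_trans h1 hn.le
    have h3 : C₀ * s^(n+1) * Z ≤ C₀ * (P/(2*C₀*Z)) * Z :=
      mul_le_mul_of_nonneg_right (mul_le_mul_of_nonneg_left h2 hC₀.le) hZ0.le
    have h4 : C₀ * (P/(2*C₀*Z)) * Z = P/2 := by field_simp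
    linarith
  obtain ⟨D, hD1, hDge⟩ : ∃ D : ℝ, 1 ≤ D ∧ ((m:ℝ)+2)*N^(m+1) ≤ D := by
    refine ⟨((m:ℝ)+2)*N^(m+1), ?_, le_rfl⟩
    have h1 : (1:ℝ) ≤ (m:ℝ)+2 := by
      have := (Nat.cast_nonneg m : (0:ℝ) ≤ (m:ℝ)); linarith
    have h2 : (1:ℝ) ≤ N^(m+1) := one_le_pow₀ hN1
    nlinarith
  obtain ⟨Cg, hCg1, hCgge⟩ : ∃ Cg : ℝ, 1 ≤ Cg ∧ M^L*(2*P)*(1 + c₂*(L:ℝ)) + Q ≤ Cg := by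
    refine ⟨M^L*(2*P)*(1 + c₂*(L:ℝ)) + Q, ?_, le_rfl⟩
    have h1 : (0:ℝ) ≤ 1 + c₂*(L:ℝ) := by
      have := mul_nonneg hc₂0 (Nat.cast_nonneg L : (0:ℝ) ≤ (L:ℝ)); linarith
    have h2 : (0:ℝ) ≤ M^L*(2*P)*(1 + c₂*(L:ℝ)) :=
      mul_nonneg (mul_nonneg (pow_nonneg hM0.le L) (by linarith)) h1
    linarith
  refine ⟨D * Cg, mul_pos (by linarith) (by linarith), ?_⟩
  intro H h ε hε0 hε6 _ _ hnn ha hb hc r hr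
  have Hnn : ∀ x : ℝ, 0 < x → x ≤ 1 → 0 ≤ H x := fun x h1 h2 => (hnn x ⟨h1,h2⟩).1
  have hnn2 : ∀ x : ℝ, 0 < x → x ≤ 1 → 0 ≤ h x := fun x h1 h2 => (hnn x ⟨h1,h2⟩).2
  -- one-step comparability
  have comp1 : ∀ a b : ℝ, 3*ε ≤ b → b ≤ 1 → b/3 ≤ a → a ≤ b → H a ≤ N * H b := by
    intro a b h1 h2 h3 h4
    have hb0 : 0 < b := by linarith
    have key := ha (b/3) ⟨by linarith, by linarith⟩ a ⟨h3, by linarith⟩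
    rw [show 3*(b/3) = b by ring] at key
    calc H a ≤ C₀ * H b := key
    _ ≤ N * H b := mul_le_mul_of_nonneg_right hCN (Hnn b hb0 h2)
  have compChain : ∀ n : ℕ, ∀ a b : ℝ, ε ≤ a → 3*ε ≤ b → a ≤ b → b ≤ 1 → b ≤ 3^n * a →
      H a ≤ N^n * H b := by
    intro n
    induction n with
    | zero =>
      intro a b h1 h2 h3 h4 h5
      have : a = b := le_antisymm h3 (by simpa using h5)
      rw [this, pow_zero, one_mul]
    | succ n ih =>
      intro a b h1 h2 h3 h4 h5
      have hb0 : 0 ≤ H b := Hnn b (by linarith) h4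
      by_cases hcase : b ≤ 3*a
      · calc H a ≤ N * H b := comp1 a b h2 h4 (by linarith) h3
        _ ≤ N^(n+1) * H b := by
            refine mul_le_mul_of_nonneg_right ?_ hb0
            calc N = N^1 := (pow_one N).symm
            _ ≤ N^(n+1) := pow_le_pow_right₀ hN1 (by omega)
      · have h3a : H a ≤ N * H (3*a) :=
          comp1 a (3*a) (by linarith) (by linarith) (by linarith) (by linarith)
        have hre : (3:ℝ)^(n+1)*a = 3^n*(3*a) := by ring
        have hrec : H (3*a) ≤ N^n * H b :=
          ih (3*a) b (by linarith) h2 (by linarith) h4 (by linarith)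
        calc H a ≤ N * H (3*a) := h3a
        _ ≤ N * (N^n * H b) := mul_le_mul_of_nonneg_left hrec hN0.le
        _ = N^(n+1) * H b := by ring
  have hchain : ∀ n : ℕ, ∀ a b : ℝ, ε ≤ a → 3*ε ≤ b → a ≤ b → b ≤ 1 → b ≤ 3^n * a →
      |h a - h b| ≤ (n:ℝ) * N^n * H b := by
    intro n
    induction n with
    | zero =>
      intro a b h1 h2 h3 h4 h5
      have : a = b := le_antisymm h3 (by simpa using h5)
      simp [this]
    | succ n ih =>
      intro a b h1 h2 h3 h4 h5
      push_cast
      have hb0 : 0 ≤ H b := Hnn b (by linarith) h4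
      have hNn1 : (1:ℝ) ≤ N^n := one_le_pow₀ hN1
      have hNs1 : (1:ℝ) ≤ N^(n+1) := one_le_pow₀ hN1
      have hn0 : (0:ℝ) ≤ (n:ℝ) := Nat.cast_nonneg n
      by_cases hcase : b ≤ 3*a
      · have hb3 : 0 < b := by linarith
        have key := hb (b/3) ⟨by linarith, by linarith⟩ a ⟨by linarith, by linarith⟩
          b ⟨by linarith, by linarith⟩
        rw [show 3*(b/3) = b by ring] at key
        calc |h a - h b| ≤ C₀ * H b := key
        _ ≤ ((n:ℝ)+1) * N^(n+1) * H b := by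
            refine mul_le_mul_of_nonneg_right ?_ hb0
            have hc1 : C₀ ≤ N^(n+1) := le_trans hCN (le_trans (pow_one N).symm.le
              (pow_le_pow_right₀ hN1 (by omega)))
            have hc2 : (0:ℝ) ≤ (n:ℝ)*N^(n+1) := mul_nonneg hn0 (pow_nonneg hN0.le (n+1))
            linarith
      · have hre : (3:ℝ)^(n+1)*a = 3^n*(3*a) := by ring
        have t1 := hb a ⟨h1, by linarith⟩ a ⟨le_refl a, by linarith⟩ (3*a) ⟨by linarith, le_refl _⟩
        have t2 : H (3*a) ≤ N^n * H b :=
          compChain n (3*a) b (by linarith) h2 (by linarith) h4 (by linarith)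
        have t3 : |h (3*a) - h b| ≤ (n:ℝ) * N^n * H b :=
          ih (3*a) b (by linarith) h2 (by linarith) h4 (by linarith)
        have tri : |h a - h b| ≤ |h a - h (3*a)| + |h (3*a) - h b| := abs_sub_le _ _ _
        have t4 : |h a - h (3*a)| ≤ N * (N^n * H b) := by
          calc |h a - h (3*a)| ≤ C₀ * H (3*a) := t1
          _ ≤ N * H (3*a) := mul_le_mul_of_nonneg_right hCN (Hnn (3*a) (by linarith) (by linarith))
          _ ≤ N * (N^n * H b) := mul_le_mul_of_nonneg_left t2 hN0.le
        have e1 : (n:ℝ)*N^n*H b ≤ (n:ℝ)*N^(n+1)*H b := by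
          refine mul_le_mul_of_nonneg_right ?_ hb0
          exact mul_le_mul_of_nonneg_left (pow_le_pow_right₀ hN1 (Nat.le_succ n)) hn0
        have e0 : N*(N^n*H b) = N^(n+1)*H b := by ring
        calc |h a - h b| ≤ N*(N^n*H b) + (n:ℝ)*N^n*H b := by linarith
        _ ≤ N^(n+1)*H b + (n:ℝ)*N^(n+1)*H b := by linarith
        _ = ((n:ℝ)+1)*N^(n+1)*H b := by ring
  -- the scales
  have hex : ∃ n : ℕ, θ^n < 3*ε := exists_pow_lt_of_lt_one (by linarith) hθ1
  have hn₀spec : θ^(Nat.find hex) < 3*ε := Nat.find_spec hex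
  have hn₀pos : Nat.find hex ≠ 0 := by
    intro h0
    rw [h0, pow_zero] at hn₀spec
    linarith
  obtain ⟨K, hKsucc⟩ : ∃ K, K + 1 = Nat.find hex :=
    ⟨Nat.find hex - 1, Nat.succ_pred_eq_of_pos (Nat.pos_of_ne_zero hn₀pos)⟩
  have hKge : 3*ε ≤ θ^K := not_lt.mp (Nat.find_min hex (by omega))
  have hKlt : θ^(K+1) < 3*ε := by rw [hKsucc]; exact hn₀spec
  have hθp : ∀ k : ℕ, (0:ℝ) < θ^k := fun k => pow_pos hθ0 k
  have hθle1 : ∀ k : ℕ, θ^k ≤ 1 := fun k => pow_le_one₀ hθ0.le hθ1.le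
  have hgrid : ∀ k : ℕ, k ≤ K → 3*ε ≤ θ^k :=
    fun k hk => le_trans hKge (pow_le_pow_of_le_one hθ0.le hθ1.le hk)
  obtain ⟨E, hE⟩ : ∃ E : ℝ, E = H 1 + h 1 := ⟨_, rfl⟩
  have hH1 : 0 ≤ H 1 := Hnn 1 one_pos le_rfl
  have hh1 : 0 ≤ h 1 := hnn2 1 one_pos le_rfl
  have hE0 : 0 ≤ E := by rw [hE]; linarith
  have hu0 : H (θ^0) ≤ E := by rw [pow_zero, hE]; linarith
  have hv0 : h (θ^0) ≤ E := by rw [pow_zero, hE]; linarith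
  -- grid steps
  have stepU : ∀ k : ℕ, k+1 ≤ K → H (θ^(k+1)) ≤ M * H (θ^k) := by
    intro k hk
    have h1 : 3*ε ≤ θ^(k+1) := hgrid (k+1) hk
    have h2 : 3*ε ≤ θ^k := hgrid k (by omega)
    have hratio : θ^k ≤ 3^m * θ^(k+1) := by
      calc θ^k = 1*θ^k := (one_mul _).symm
      _ ≤ (3^m*θ)*θ^k := mul_le_mul_of_nonneg_right hm (hθp k).le
      _ = 3^m*θ^(k+1) := by rw [pow_succ]; ring
    have := compChain m (θ^(k+1)) (θ^k) (by linarith)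
      h2 (pow_le_pow_of_le_one hθ0.le hθ1.le (Nat.le_succ k)) (hθle1 k) hratio
    calc H (θ^(k+1)) ≤ N^m * H (θ^k) := this
    _ ≤ M * H (θ^k) := mul_le_mul_of_nonneg_right hMge (Hnn _ (hθp k) (hθle1 k))
  have stepV : ∀ k : ℕ, k+1 ≤ K → h (θ^(k+1)) ≤ h (θ^k) + c₂ * H (θ^k) := by
    intro k hk
    have h1 : 3*ε ≤ θ^(k+1) := hgrid (k+1) hk
    have h2 : 3*ε ≤ θ^k := hgrid k (by omega)
    have hratio : θ^k ≤ 3^m * θ^(k+1) := by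
      calc θ^k = 1*θ^k := (one_mul _).symm
      _ ≤ (3^m*θ)*θ^k := mul_le_mul_of_nonneg_right hm (hθp k).le
      _ = 3^m*θ^(k+1) := by rw [pow_succ]; ring
    have habs := hchain m (θ^(k+1)) (θ^k) (by linarith)
      h2 (pow_le_pow_of_le_one hθ0.le hθ1.le (Nat.le_succ k)) (hθle1 k) hratio
    have h3 : h (θ^(k+1)) - h (θ^k) ≤ (m:ℝ)*N^m * H (θ^k) :=
      le_trans (le_abs_self _) habs
    have h4 : (m:ℝ)*N^m * H (θ^k) ≤ c₂ * H (θ^k) :=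
      mul_le_mul_of_nonneg_right hc₂ge (Hnn _ (hθp k) (hθle1 k))
    linarith
  have fine : ∀ k : ℕ, k+2 ≤ K+1 →
      H (θ^(k+2)) ≤ (1/2) * H (θ^(k+1)) + C₀ * (ε/θ^(k+1))^μ * ((M + c₂) * H (θ^k) + h (θ^k)) := by
    intro k hk
    have hk1 : k+1 ≤ K := by omega
    have h3e : 3*ε ≤ θ^(k+1) := hgrid (k+1) hk1
    have h3e0 : 3*ε ≤ θ^k := hgrid k (by omega)
    have hrIcc : θ^(k+1) ∈ Set.Icc ε (1/3) := by
      constructor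
      · linarith
      · calc θ^(k+1) ≤ θ^1 := pow_le_pow_of_le_one hθ0.le hθ1.le (by omega)
        _ = θ := pow_one θ
        _ ≤ 1/3 := by linarith
    have hcc := hc (θ^(k+1)) hrIcc
    rw [show θ*θ^(k+1) = θ^(k+2) by rw [pow_succ]; ring] at hcc
    have hbig1 : 3*θ^(k+1) ≤ θ^k := by
      calc 3*θ^(k+1) = (3*θ)*θ^k := by rw [pow_succ]; ring
      _ ≤ 1*θ^k := mul_le_mul_of_nonneg_right (by linarith) (hθp k).le
      _ = θ^k := one_mul _
    have hbig2 : θ^k ≤ 3^m*(3*θ^(k+1)) := by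
      have e : (3:ℝ)^m*(3*θ^(k+1)) = ((3^m*θ)*θ^k)*3 := by rw [pow_succ]; ring
      have e2 : θ^k ≤ (3^m*θ)*θ^k := by
        calc θ^k = 1*θ^k := (one_mul _).symm
        _ ≤ (3^m*θ)*θ^k := mul_le_mul_of_nonneg_right hm (hθp k).le
      linarith only [e, e2, hθp k]
    have hB1 : H (3*θ^(k+1)) ≤ M * H (θ^k) := by
      have := compChain m (3*θ^(k+1)) (θ^k) (by linarith only [h3e, hε0, hθp (k+1)])
        h3e0 hbig1 (hθle1 k) hbig2
      calc H (3*θ^(k+1)) ≤ N^m * H (θ^k) := this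
      _ ≤ M * H (θ^k) := mul_le_mul_of_nonneg_right hMge (Hnn _ (hθp k) (hθle1 k))
    have hB2 : h (3*θ^(k+1)) ≤ h (θ^k) + c₂ * H (θ^k) := by
      have habs := hchain m (3*θ^(k+1)) (θ^k) (by linarith only [h3e, hε0, hθp (k+1)])
        h3e0 hbig1 (hθle1 k) hbig2
      have h3 : h (3*θ^(k+1)) - h (θ^k) ≤ (m:ℝ)*N^m * H (θ^k) :=
        le_trans (le_abs_self _) habs
      have h4 : (m:ℝ)*N^m * H (θ^k) ≤ c₂ * H (θ^k) :=
        mul_le_mul_of_nonneg_right hc₂ge (Hnn _ (hθp k) (hθle1 k))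
      linarith
    have ht0 : 0 ≤ C₀ * (ε/θ^(k+1))^μ :=
      mul_nonneg hC₀.le (Real.rpow_nonneg (div_nonneg hε0.le (hθp _).le) μ)
    have hsum : H (3*θ^(k+1)) + h (3*θ^(k+1)) ≤ (M + c₂) * H (θ^k) + h (θ^k) := by
      have hHk := Hnn (θ^k) (hθp k) (hθle1 k)
      linarith only [hB1, hB2, hHk]
    have hfin := mul_le_mul_of_nonneg_left hsum ht0
    linarith only [hcc, hfin]
  -- Phase 1
  have vstep : ∀ k : ℕ, k+1 ≤ K →
      H (θ^k) ≤ E*P*((1/2:ℝ)^k + s^(K-k)) →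
      h (θ^k) ≤ E*(1 + c₂*P*(2 - 2*(1/2:ℝ)^k + s^(K-k)*s/(1-s))) →
      h (θ^(k+1)) ≤ E*(1 + c₂*P*(2 - 2*(1/2:ℝ)^(k+1) + s^(K-(k+1))*s/(1-s))) := by
    intro k hk h1 h2
    have h3 := stepV k hk
    have hy : s^(K-k) = s^(K-(k+1))*s := by
      rw [← pow_succ]
      congr 1
      omega
    have hne : (1:ℝ)-s ≠ 0 := by linarith
    have key : E*(1 + c₂*P*(2 - 2*(1/2:ℝ)^k + s^(K-k)*s/(1-s))) + c₂*(E*P*((1/2:ℝ)^k + s^(K-k)))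
        = E*(1 + c₂*P*(2 - 2*(1/2:ℝ)^(k+1) + s^(K-(k+1))*s/(1-s))) := by
      rw [hy]
      field_simp
      ring
    calc h (θ^(k+1)) ≤ h (θ^k) + c₂ * H (θ^k) := h3
    _ ≤ E*(1 + c₂*P*(2 - 2*(1/2:ℝ)^k + s^(K-k)*s/(1-s))) + c₂*(E*P*((1/2:ℝ)^k + s^(K-k))) := by
        have := mul_le_mul_of_nonneg_left h1 hc₂0
        linarith only [h2, this]
    _ = _ := key
  obtain ⟨J, hJ⟩ : ∃ J : ℕ, J = K - L := ⟨_, rfl⟩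
  have T1 : ∀ k : ℕ, k ≤ J → H (θ^k) ≤ E*P*((1/2:ℝ)^k + s^(K-k)) ∧
      h (θ^k) ≤ E*(1 + c₂*P*(2 - 2*(1/2:ℝ)^k + s^(K-k)*s/(1-s))) := by
    intro k
    induction k using Nat.strong_induction_on with
    | _ k ih =>
    intro hk
    have hJK : J ≤ K := by omega
    match k, hk with
    | 0, hk =>
      constructor
      · have hp1 : (1:ℝ) ≤ P*((1/2:ℝ)^0 + s^(K-0)) := by
          have w := mul_nonneg hP0.le (pow_nonneg hs0.le (K-0))
          linarith only [hP1, w]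
        calc H (θ^0) ≤ E := hu0
        _ = E*1 := (mul_one E).symm
        _ ≤ E*(P*((1/2:ℝ)^0 + s^(K-0))) := mul_le_mul_of_nonneg_left hp1 hE0
        _ = E*P*((1/2:ℝ)^0 + s^(K-0)) := by ring
      · have hterm : 0 ≤ s^(K-0)*s/(1-s) :=
          div_nonneg (mul_nonneg (pow_nonneg hs0.le _) hs0.le) hs11.le
        have hp1 : (1:ℝ) ≤ 1 + c₂*P*(2 - 2*(1/2:ℝ)^0 + s^(K-0)*s/(1-s)) := by
          have h9 : (0:ℝ) ≤ c₂*P := mul_nonneg hc₂0 hP0.le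
          have w := mul_nonneg h9 hterm
          linarith only [w]
        calc h (θ^0) ≤ E := hv0
        _ = E*1 := (mul_one E).symm
        _ ≤ E*(1 + c₂*P*(2 - 2*(1/2:ℝ)^0 + s^(K-0)*s/(1-s))) := mul_le_mul_of_nonneg_left hp1 hE0
    | 1, hk =>
      have h1K : 1 ≤ K := by omega
      constructor
      · have hstep := stepU 0 (by omega)
        have hME : M * H (θ^0) ≤ M * E := mul_le_mul_of_nonneg_left hu0 hM0.le
        have hp1 : M ≤ P*((1/2:ℝ)^1 + s^(K-1)) := by
          have w := mul_nonneg hP0.le (pow_nonneg hs0.le (K-1))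
          linarith only [hP2M, w]
        calc H (θ^1) ≤ M * H (θ^0) := hstep
        _ ≤ M * E := hME
        _ = E * M := by ring
        _ ≤ E * (P*((1/2:ℝ)^1 + s^(K-1))) := mul_le_mul_of_nonneg_left hp1 hE0
        _ = E*P*((1/2:ℝ)^1 + s^(K-1)) := by ring
      · obtain ⟨hu, hv⟩ := ih 0 (by omega) (by omega)
        exact vstep 0 (by omega) hu hv
    | (k+2), hk =>
      obtain ⟨hu1, hv1⟩ := ih (k+1) (by omega) (by omega)
      obtain ⟨hu0', hv0'⟩ := ih k (by omega) (by omega)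
      have hK2 : k+2 ≤ K := by omega
      constructor
      · -- the decay step
        have hfine := fine k (by omega)
        -- bound the rpow factor
        have hA : L+1 ≤ K-(k+1) := by omega
        have ht : (ε/θ^(k+1))^μ ≤ s^(L+1) * s^(K-(k+1)) := by
          have h1 : ε/θ^(k+1) ≤ θ^(K-(k+1)) := by
            rw [div_le_iff₀ (hθp (k+1))]
            calc ε ≤ θ^K := by linarith
            _ = θ^(K-(k+1))*θ^(k+1) := by rw [← pow_add]; congr 1; omega
          have h2 : (ε/θ^(k+1))^μ ≤ ((θ^(K-(k+1)):ℝ))^μ :=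
            Real.rpow_le_rpow (div_nonneg hε0.le (hθp _).le) h1 hμ.le
          have h3 : ((θ^(K-(k+1)):ℝ))^μ = (θ^μ)^(K-(k+1)) := by
            rw [← Real.rpow_natCast θ (K-(k+1)), ← Real.rpow_mul hθ0.le, mul_comm,
              Real.rpow_mul hθ0.le, Real.rpow_natCast]
          have h4 : (θ^μ)^(K-(k+1)) ≤ (s*s)^(K-(k+1)) :=
            pow_le_pow_left₀ (Real.rpow_nonneg hθ0.le μ) hsq _
          have h5 : (s*s)^(K-(k+1)) = s^(K-(k+1)) * s^(K-(k+1)) := mul_pow s s _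
          have h6 : s^(K-(k+1)) ≤ s^(L+1) := pow_le_pow_of_le_one hs0.le hs1.le hA
          calc (ε/θ^(k+1))^μ ≤ (θ^μ)^(K-(k+1)) := by rw [← h3]; exact h2
          _ ≤ s^(K-(k+1)) * s^(K-(k+1)) := by rw [← h5]; exact h4
          _ ≤ s^(L+1) * s^(K-(k+1)) :=
            mul_le_mul_of_nonneg_right h6 (pow_nonneg hs0.le _)
        -- bound the bracket
        have hbr : (M + c₂) * H (θ^k) + h (θ^k) ≤ Z*E := by
          have e1 : ((1/2:ℝ))^k ≤ 1 := pow_le_one₀ (by norm_num) (by norm_num)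
          have e2 : s^(K-k) ≤ 1 := pow_le_one₀ hs0.le hs1.le
          have e3 : H (θ^k) ≤ E*P*2 := by
            calc H (θ^k) ≤ E*P*((1/2:ℝ)^k + s^(K-k)) := hu0'
            _ ≤ E*P*2 := by
                have w := mul_le_mul_of_nonneg_left
                  (show (1/2:ℝ)^k + s^(K-k) ≤ 2 by linarith only [e1, e2])
                  (mul_nonneg hE0 hP0.le)
                linarith only [w]
          have e4 : h (θ^k) ≤ Q*E := by
            have e5 : s^(K-k)*s/(1-s) ≤ s/(1-s) := by
              have e6 : s^(K-k)*s ≤ s := by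
                have w := mul_le_mul_of_nonneg_right e2 hs0.le
                linarith only [w]
              gcongr
            calc h (θ^k) ≤ E*(1 + c₂*P*(2 - 2*(1/2:ℝ)^k + s^(K-k)*s/(1-s))) := hv0'
            _ ≤ E*(1 + c₂*P*(2 + s/(1-s))) := by
                have h9 : (0:ℝ) ≤ c₂*P := mul_nonneg hc₂0 hP0.le
                have h10 : 2 - 2*(1/2:ℝ)^k + s^(K-k)*s/(1-s) ≤ 2 + s/(1-s) := by
                  have h11 : (0:ℝ) ≤ (1/2:ℝ)^k := by positivity
                  linarith only [e5, h11]
                have w := mul_le_mul_of_nonneg_left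
                  (mul_le_mul_of_nonneg_left h10 h9) hE0
                linarith only [w]
            _ ≤ Q*E := by
                have w := mul_le_mul_of_nonneg_left hQge hE0
                linarith only [w]
          have hMc : 0 ≤ M + c₂ := by linarith
          have e7 : (M+c₂) * H (θ^k) ≤ (M+c₂)*(E*P*2) := mul_le_mul_of_nonneg_left e3 hMc
          have e8 : 2*(M+c₂)*P*E + Q*E ≤ Z*E := by
            have w := mul_le_mul_of_nonneg_right hZge hE0
            linarith only [w]
          linarith only [e7, e8, e4]
        have hterm : C₀ * (ε/θ^(k+1))^μ * ((M + c₂) * H (θ^k) + h (θ^k))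
            ≤ (P/2) * s^(K-(k+1)) * E := by
          have w0 : 0 ≤ (ε/θ^(k+1))^μ := Real.rpow_nonneg (div_nonneg hε0.le (hθp _).le) μ
          have w1 : 0 ≤ (M + c₂) * H (θ^k) + h (θ^k) := by
            have := Hnn (θ^k) (hθp k) (hθle1 k)
            have := hnn2 (θ^k) (hθp k) (hθle1 k)
            nlinarith
          have w2 : C₀ * (ε/θ^(k+1))^μ * ((M + c₂) * H (θ^k) + h (θ^k)) ≤ C₀ * (ε/θ^(k+1))^μ * (Z*E) :=
            mul_le_mul_of_nonneg_left hbr (mul_nonneg hC₀.le w0)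
          have w3 : C₀ * (ε/θ^(k+1))^μ * (Z*E) ≤ C₀ * (s^(L+1) * s^(K-(k+1))) * (Z*E) := by
            refine mul_le_mul_of_nonneg_right (mul_le_mul_of_nonneg_left ht hC₀.le) ?_
            exact mul_nonneg hZ0.le hE0
          have w4 : C₀ * (s^(L+1) * s^(K-(k+1))) * (Z*E) = (C₀ * s^(L+1) * Z) * (s^(K-(k+1)) * E) := by
            ring
          have w5 : (C₀ * s^(L+1) * Z) * (s^(K-(k+1)) * E) ≤ (P/2) * (s^(K-(k+1)) * E) :=
            mul_le_mul_of_nonneg_right hLkey (mul_nonneg (pow_nonneg hs0.le _) hE0)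
          calc C₀ * (ε/θ^(k+1))^μ * ((M + c₂) * H (θ^k) + h (θ^k))
              ≤ C₀ * (ε/θ^(k+1))^μ * (Z*E) := w2
          _ ≤ C₀ * (s^(L+1) * s^(K-(k+1))) * (Z*E) := w3
          _ = (C₀ * s^(L+1) * Z) * (s^(K-(k+1)) * E) := w4
          _ ≤ (P/2) * (s^(K-(k+1)) * E) := w5
          _ = (P/2) * s^(K-(k+1)) * E := by ring
        have hhalf : (1/2) * H (θ^(k+1)) ≤ (1/2) * (E*P*((1/2:ℝ)^(k+1) + s^(K-(k+1)))) := by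
          linarith only [hu1]
        have hys : s^(K-(k+1)) = s^(K-(k+2))*s := by
          rw [← pow_succ]; congr 1; omega
        have hyle : s^(K-(k+1)) ≤ s^(K-(k+2)) := by
          rw [hys]
          have w := mul_le_mul_of_nonneg_left hs1.le (pow_nonneg hs0.le (K-(k+2)))
          linarith only [w]
        calc H (θ^(k+2)) ≤ (1/2) * H (θ^(k+1))
              + C₀ * (ε/θ^(k+1))^μ * ((M + c₂) * H (θ^k) + h (θ^k)) := hfine
        _ ≤ (1/2) * (E*P*((1/2:ℝ)^(k+1) + s^(K-(k+1)))) + (P/2) * s^(K-(k+1)) * E := by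
            linarith only [hhalf, hterm]
        _ = E*P*((1/2:ℝ)^(k+2) + s^(K-(k+1))) := by ring
        _ ≤ E*P*((1/2:ℝ)^(k+2) + s^(K-(k+2))) := by
            have w := mul_le_mul_of_nonneg_left
              (show (1/2:ℝ)^(k+2) + s^(K-(k+1)) ≤ (1/2:ℝ)^(k+2) + s^(K-(k+2)) by
                linarith only [hyle])
              (mul_nonneg hE0 hP0.le)
            linarith only [w]
      · exact vstep (k+1) (by omega) hu1 hv1
  have T2 : ∀ j : ℕ, J + j ≤ K →
      H (θ^(J+j)) ≤ M^j * (2*P*E) ∧ h (θ^(J+j)) ≤ Q*E + c₂*(j:ℝ)*M^L*(2*P*E) := by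
    intro j
    induction j with
    | zero =>
      intro hj
      obtain ⟨hu, hv⟩ := T1 J le_rfl
      have e1 : ((1/2:ℝ))^J ≤ 1 := pow_le_one₀ (by norm_num) (by norm_num)
      have e15 : (0:ℝ) ≤ ((1/2:ℝ))^J := by positivity
      have e2 : s^(K-J) ≤ 1 := pow_le_one₀ hs0.le hs1.le
      have e25 : (0:ℝ) ≤ s^(K-J) := pow_nonneg hs0.le _
      constructor
      · have w := mul_le_mul_of_nonneg_left
          (show (1/2:ℝ)^J + s^(K-J) ≤ 2 by linarith only [e1, e2])
          (mul_nonneg hE0 hP0.le)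
        have : H (θ^(J+0)) ≤ E*P*2 := by
          rw [Nat.add_zero]
          linarith only [hu, w]
        rw [pow_zero]
        linarith only [this]
      · have e5 : s^(K-J)*s/(1-s) ≤ s/(1-s) := by
          have e6 : s^(K-J)*s ≤ s := by
            have w := mul_le_mul_of_nonneg_right e2 hs0.le
            linarith only [w]
          gcongr
        have h9 : (0:ℝ) ≤ c₂*P := mul_nonneg hc₂0 hP0.le
        have h10 : 2 - 2*(1/2:ℝ)^J + s^(K-J)*s/(1-s) ≤ 2 + s/(1-s) := by
          linarith only [e5, e15]
        have w := mul_le_mul_of_nonneg_left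
          (mul_le_mul_of_nonneg_left h10 h9) hE0
        have w2 := mul_le_mul_of_nonneg_left hQge hE0
        have : h (θ^(J+0)) ≤ Q*E := by
          rw [Nat.add_zero]
          linarith only [hv, w, w2]
        push_cast
        linarith only [this]
    | succ j ihj =>
      intro hj
      obtain ⟨hu, hv⟩ := ihj (by omega)
      have hjL : j + 1 ≤ L := by omega
      have hsU := stepU (J+j) (by omega)
      have hsV := stepV (J+j) (by omega)
      have hadd : J + (j+1) = (J+j) + 1 := rfl
      constructor
      · rw [hadd]
        calc H (θ^((J+j)+1)) ≤ M * H (θ^(J+j)) := hsU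
        _ ≤ M * (M^j*(2*P*E)) := mul_le_mul_of_nonneg_left hu hM0.le
        _ = M^(j+1)*(2*P*E) := by ring
      · rw [hadd]
        have w1 : c₂ * H (θ^(J+j)) ≤ c₂ * (M^j*(2*P*E)) := mul_le_mul_of_nonneg_left hu hc₂0
        have hMjL : M^j ≤ M^L := pow_le_pow_right₀ hM1 (by omega)
        have h2PE : (0:ℝ) ≤ 2*P*E := mul_nonneg (by linarith) hE0
        have w2 : c₂ * (M^j*(2*P*E)) ≤ c₂ * (M^L*(2*P*E)) :=
          mul_le_mul_of_nonneg_left (mul_le_mul_of_nonneg_right hMjL h2PE) hc₂0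
        have goalcast : (((j:ℕ)+1:ℕ):ℝ) = (j:ℝ)+1 := by push_cast; ring
        calc h (θ^((J+j)+1)) ≤ h (θ^(J+j)) + c₂ * H (θ^(J+j)) := hsV
        _ ≤ Q*E + c₂*(j:ℝ)*M^L*(2*P*E) + c₂ * (M^L*(2*P*E)) := by
            linarith only [hv, w1, w2]
        _ = Q*E + c₂*((j:ℝ)+1)*M^L*(2*P*E) := by ring
        _ = Q*E + c₂*(((j+1:ℕ)):ℝ)*M^L*(2*P*E) := by rw [goalcast]
  have GridAll : ∀ k : ℕ, k ≤ K → H (θ^k) + h (θ^k) ≤ Cg * E := by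
    intro k hk
    have hCgE := mul_le_mul_of_nonneg_right hCgge hE0
    rcases le_or_gt k J with hkJ | hkJ
    · obtain ⟨hu, hv⟩ := T1 k hkJ
      have e1 : ((1/2:ℝ))^k ≤ 1 := pow_le_one₀ (by norm_num) (by norm_num)
      have e15 : (0:ℝ) ≤ ((1/2:ℝ))^k := by positivity
      have e2 : s^(K-k) ≤ 1 := pow_le_one₀ hs0.le hs1.le
      have e25 : (0:ℝ) ≤ s^(K-k) := pow_nonneg hs0.le _
      have wu : H (θ^k) ≤ E*P*2 := by
        have w := mul_le_mul_of_nonneg_left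
          (show (1/2:ℝ)^k + s^(K-k) ≤ 2 by linarith only [e1, e2])
          (mul_nonneg hE0 hP0.le)
        linarith only [hu, w]
      have wv : h (θ^k) ≤ Q*E := by
        have e5 : s^(K-k)*s/(1-s) ≤ s/(1-s) := by
          have e6 : s^(K-k)*s ≤ s := by
            have w := mul_le_mul_of_nonneg_right e2 hs0.le
            linarith only [w]
          gcongr
        have h9 : (0:ℝ) ≤ c₂*P := mul_nonneg hc₂0 hP0.le
        have h10 : 2 - 2*(1/2:ℝ)^k + s^(K-k)*s/(1-s) ≤ 2 + s/(1-s) := by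
          linarith only [e5, e15]
        have w := mul_le_mul_of_nonneg_left (mul_le_mul_of_nonneg_left h10 h9) hE0
        have w2 := mul_le_mul_of_nonneg_left hQge hE0
        linarith only [hv, w, w2]
      -- E*P*2 ≤ M^L*(2*P)*(1+c₂*L)*E
      have hbig : E*P*2 ≤ M^L*(2*P)*(1 + c₂*(L:ℝ))*E := by
        have f1 : (1:ℝ) ≤ M^L*(1 + c₂*(L:ℝ)) := by
          have := mul_nonneg hc₂0 (Nat.cast_nonneg L : (0:ℝ) ≤ (L:ℝ))
          have hMLn : (1:ℝ) ≤ M^L := one_le_pow₀ hM1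
          nlinarith
        have f2 := mul_le_mul_of_nonneg_left f1 (mul_nonneg (mul_nonneg hE0 hP0.le) (by norm_num : (0:ℝ) ≤ 2))
        calc E*P*2 = E*P*2*1 := by ring
        _ ≤ E*P*2*(M^L*(1 + c₂*(L:ℝ))) := f2
        _ = M^L*(2*P)*(1 + c₂*(L:ℝ))*E := by ring
      linarith only [wu, wv, hbig, hCgE]
    · have hJk : J ≤ k := hkJ.le
      obtain ⟨hu, hv⟩ := T2 (k-J) (by omega)
      rw [show J+(k-J) = k from by omega] at hu hv
      have hkJL : k - J ≤ L := by omega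
      have h2PE : (0:ℝ) ≤ 2*P*E := mul_nonneg (by linarith) hE0
      have hMkL : M^(k-J) ≤ M^L := pow_le_pow_right₀ hM1 hkJL
      have wu : H (θ^k) ≤ M^L*(2*P*E) := by
        have w := mul_le_mul_of_nonneg_right hMkL h2PE
        linarith only [hu, w]
      have wv : h (θ^k) ≤ Q*E + c₂*(L:ℝ)*M^L*(2*P*E) := by
        have hcast : ((k-J:ℕ):ℝ) ≤ (L:ℝ) := by exact_mod_cast hkJL
        have w : c₂*((k-J:ℕ):ℝ)*M^L*(2*P*E) ≤ c₂*(L:ℝ)*M^L*(2*P*E) := by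
          have f := mul_le_mul_of_nonneg_left hcast hc₂0
          have g := mul_le_mul_of_nonneg_right
            (mul_le_mul_of_nonneg_right f (pow_nonneg hM0.le L)) h2PE
          linarith only [g]
        linarith only [hv, w]
      linarith only [wu, wv, hCgE]
  -- from the grid to all radii
  obtain ⟨hrε, hr1⟩ := hr
  have hexr : ∃ j : ℕ, θ^j < r := exists_pow_lt_of_lt_one (by linarith) hθ1
  have hj₀spec : θ^(Nat.find hexr) < r := Nat.find_spec hexr
  have hj₀pos : Nat.find hexr ≠ 0 := by
    intro h0
    rw [h0, pow_zero] at hj₀spec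
    linarith
  obtain ⟨j₁, hj₁⟩ : ∃ j₁, j₁ + 1 = Nat.find hexr :=
    ⟨Nat.find hexr - 1, Nat.succ_pred_eq_of_pos (Nat.pos_of_ne_zero hj₀pos)⟩
  have hj₁ge : r ≤ θ^j₁ := not_lt.mp (Nat.find_min hexr (by omega))
  obtain ⟨k, hkK, hrk, hk3⟩ : ∃ k, k ≤ K ∧ r ≤ θ^k ∧ θ^k ≤ 3^(m+1)*r := by
    rcases le_or_gt j₁ K with hcase | hcase
    · refine ⟨j₁, hcase, hj₁ge, ?_⟩
      have hsucc : θ^(j₁+1) < r := by rw [hj₁]; exact hj₀spec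
      have e : θ^(j₁+1) = θ^j₁*θ := pow_succ θ j₁
      have e2 : θ^j₁ ≤ (3^m*θ)*θ^j₁ := by
        calc θ^j₁ = 1*θ^j₁ := (one_mul _).symm
        _ ≤ (3^m*θ)*θ^j₁ := mul_le_mul_of_nonneg_right hm (hθp j₁).le
      have e3 : (3:ℝ)^m*(θ^j₁*θ) ≤ 3^m*r := by
        have := mul_le_mul_of_nonneg_left (show θ^j₁*θ ≤ r by linarith only [hsucc, e]) (le_of_lt (by positivity : (0:ℝ) < (3:ℝ)^m))
        linarith only [this]
      have e4 : (3:ℝ)^(m+1) = 3^m*3 := pow_succ 3 m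
      have w : (0:ℝ) ≤ 3^m*r := mul_nonneg h3mpos.le (by linarith only [hε0, hrε])
      rw [pow_succ]
      linarith only [e, e2, e3, w]
    · have hKj : ¬ θ^(K+1) < r := Nat.find_min hexr (by omega)
      push_neg at hKj
      refine ⟨K, le_rfl, le_trans hKj (by
        have e9 : θ^(K+1) = θ^K*θ := pow_succ θ K
        have w9 := mul_le_mul_of_nonneg_left hθ1.le (hθp K).le
        have w8 : θ^K*1 = θ^K := mul_one _
        linarith only [e9, w9, w8]), ?_⟩
      have e : θ^(K+1) = θ^K*θ := pow_succ θ K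
      have e4 : (3:ℝ)^(m+1) = 3^m*3 := pow_succ 3 m
      -- θ^K*θ < 3ε ≤ 3r, so 3^m*θ*θ^K < 3^m*3r, and θ^K ≤ 3^m*θ*θ^K
      have e2 : θ^K ≤ (3^m*θ)*θ^K := by
        calc θ^K = 1*θ^K := (one_mul _).symm
        _ ≤ (3^m*θ)*θ^K := mul_le_mul_of_nonneg_right hm (hθp K).le
      have e3 : (3:ℝ)^m*(θ^K*θ) ≤ 3^m*(3*r) := by
        have h5 : θ^K*θ ≤ 3*r := by linarith only [hKlt, e, hrε]
        have := mul_le_mul_of_nonneg_left h5 (le_of_lt (by positivity : (0:ℝ) < (3:ℝ)^m))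
        linarith only [this]
      have w : (0:ℝ) ≤ 3^m*r := mul_nonneg h3mpos.le (by linarith only [hε0, hrε])
      rw [pow_succ]
      linarith only [e, e2, e3, w]
  have hθk0 : 0 < θ^k := hθp k
  have hθk1 : θ^k ≤ 1 := hθle1 k
  have hHk0 : 0 ≤ H (θ^k) := Hnn _ hθk0 hθk1
  have hhk0 : 0 ≤ h (θ^k) := hnn2 _ hθk0 hθk1
  have hchain1 : H r ≤ N^(m+1) * H (θ^k) :=
    compChain (m+1) r (θ^k) hrε (hgrid k hkK) hrk hθk1 hk3
  have hchain2 : |h r - h (θ^k)| ≤ ((m+1:ℕ):ℝ) * N^(m+1) * H (θ^k) :=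
    hchain (m+1) r (θ^k) hrε (hgrid k hkK) hrk hθk1 hk3
  have hchain2' : h r ≤ h (θ^k) + ((m:ℝ)+1) * N^(m+1) * H (θ^k) := by
    have := le_trans (le_abs_self _) hchain2
    have hcst : ((m+1:ℕ):ℝ) = (m:ℝ)+1 := by push_cast; ring
    rw [hcst] at this
    linarith only [this]
  have hgridk := GridAll k hkK
  -- combine
  have hDk : ((m:ℝ)+2) * N^(m+1) ≤ D := hDge
  have hsum1 : H r + h r ≤ ((m:ℝ)+2) * N^(m+1) * H (θ^k) + h (θ^k) := by
    linarith only [hchain1, hchain2']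
  have hsum2 : ((m:ℝ)+2) * N^(m+1) * H (θ^k) + h (θ^k) ≤ D * (H (θ^k) + h (θ^k)) := by
    have w1 := mul_le_mul_of_nonneg_right hDk hHk0
    have w2 := mul_le_mul_of_nonneg_right (show (1:ℝ) ≤ D from hD1) hhk0
    linarith only [w1, w2]
  have hsum3 : D * (H (θ^k) + h (θ^k)) ≤ D * (Cg * E) :=
    mul_le_mul_of_nonneg_left hgridk (by linarith)
  calc H r + h r ≤ ((m:ℝ)+2) * N^(m+1) * H (θ^k) + h (θ^k) := hsum1
  _ ≤ D * (H (θ^k) + h (θ^k)) := hsum2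
  _ ≤ D * (Cg * E) := hsum3
  _ = D * Cg * (H 1 + h 1) := by rw [hE]; ring
end
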